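/- Let n ≥ 1 be real, μ1 ∈ ℝ, δ ≥ 0, and κ := (μ1−1−√δ)/2. Then for all real p, the algebraic identity 2p·γ_F(p, n+κ+√δ) − γ_S(p, n+μ1) = (p−1)·(2 − (n+√δ)p) holds. Consequently, for an integer n ≥ 1 and p > 1: 2p·γ_F(p, n+κ+√δ) > γ_S(p, n+μ1) if and only if n = 1, √δ < 1 and p < 2/(1+√δ). -/

import Mathlib

/-- `γ_F(p,ν) := 2 − ν(p−1)`. -/
def gammaF (p ν : ℝ) : ℝ := 2 - ν * (p - 1)

/-- `γ_S(p,ν) := 2 + (ν+1)p − (ν−1)p²`. -/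
def gammaS (p ν : ℝ) : ℝ := 2 + (ν + 1) * p - (ν - 1) * p ^ 2

theorem two_mul_gammaF_sub_gammaS (n μ s p : ℝ) :
    2 * p * gammaF p (n + (μ - 1 - s) / 2 + s) - gammaS p (n + μ) =
      (p - 1) * (2 - (n + s) * p) := by
  simp only [gammaF, gammaS]
  ring

theorem nat_add_mul_lt_two_iff {n : ℕ} (hn : 1 ≤ n) {s p : ℝ} (hs : 0 ≤ s) (hp : 1 < p) :
    (n + s) * p < 2 ↔ n = 1 ∧ s < 1 ∧ p < 2 / (1 + s) := by
  rw [lt_div_iff₀ (by positivity)]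
  constructor
  · intro h
    have hn1 : n = 1 := by
      by_contra hne
      have h2n : (2 : ℝ) ≤ n := by exact_mod_cast (show 2 ≤ n by omega)
      nlinarith
    subst hn1
    push_cast at h
    exact ⟨rfl, by nlinarith, by linarith⟩
  · rintro ⟨rfl, -, h⟩
    push_cast
    linarith

theorem two_p_gammaF_shift_vs_gammaS_general (μ1 δ : ℝ) :
    (∀ n : ℝ, 1 ≤ n → ∀ p : ℝ,
      2 * p * gammaF p (n + (μ1 - 1 - Real.sqrt δ) / 2 + Real.sqrt δ) -
          gammaS p (n + μ1) =
        (p - 1) * (2 - (n + Real.sqrt δ) * p)) ∧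
    (∀ n : ℕ, 1 ≤ n → ∀ p : ℝ, 1 < p →
      (gammaS p ((n : ℝ) + μ1) <
          2 * p * gammaF p ((n : ℝ) + (μ1 - 1 - Real.sqrt δ) / 2 + Real.sqrt δ) ↔
        n = 1 ∧ Real.sqrt δ < 1 ∧ p < 2 / (1 + Real.sqrt δ))) := by
  refine ⟨fun n _ p => two_mul_gammaF_sub_gammaS n μ1 _ p, fun n hn p hp => ?_⟩
  rw [← sub_pos, two_mul_gammaF_sub_gammaS, mul_pos_iff_of_pos_left (sub_pos.2 hp), sub_pos]
  exact nat_add_mul_lt_two_iff hn (Real.sqrt_nonneg δ) hp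

/-- The identity `2p γ_F(p,n+κ+√δ) − γ_S(p,n+μ1) = (p−1)(2 − (n+√δ)p)` and its
consequence: for integer `n ≥ 1` and `p > 1`, the strict inequality holds
exactly when `n = 1`, `√δ < 1` and `p < 2/(1+√δ)`. -/
theorem two_p_gammaF_shift_vs_gammaS (μ1 δ : ℝ) (hδ : 0 ≤ δ) :
    (∀ n : ℝ, 1 ≤ n → ∀ p : ℝ,
      2 * p * gammaF p (n + (μ1 - 1 - Real.sqrt δ) / 2 + Real.sqrt δ) -
          gammaS p (n + μ1) =
        (p - 1) * (2 - (n + Real.sqrt δ) * p)) ∧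
    (∀ n : ℕ, 1 ≤ n → ∀ p : ℝ, 1 < p →
      (gammaS p ((n : ℝ) + μ1) <
          2 * p * gammaF p ((n : ℝ) + (μ1 - 1 - Real.sqrt δ) / 2 + Real.sqrt δ) ↔
        n = 1 ∧ Real.sqrt δ < 1 ∧ p < 2 / (1 + Real.sqrt δ))) :=
  two_p_gammaF_shift_vs_gammaS_general μ1 δ
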